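/- arXiv:2003.06023 — 2 statements merged into one kernel-verified Lean document; each statement's English description precedes it below -/
import Mathlib

section
/- Under Assumptions 1 and 2, the joint probabilities that both units are always-takers, and that both are never-takers, are identified: P[AT_i ∩ AT_j] = E[D_i · D_j | Z_i=0, Z_j=0] and P[NT_i ∩ NT_j] = E[(1−D_i)(1−D_j) | Z_i=1, Z_j=1]. -/
open MeasureTheory ProbabilityTheory

/-! On the event `{Z_i = z, Z_j = z'}` the observed treatments are the potential treatments at
the instrument values `(z, z')`, and by the IV assumption conditioning on the instruments does not
change the law of the potential treatments. For `z = z' = 0` (resp. `1`) the product of the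
treatment indicators (resp. of their complements) is the indicator of joint always-takers
(resp. never-takers). -/

noncomputable def bInd (b : Bool) : ℝ := if b then 1 else 0

lemma bInd_mul_bInd (a b : Bool) : bInd a * bInd b = bInd (a && b) := by
  cases a <;> cases b <;> simp [bInd]

lemma one_sub_bInd (a : Bool) : 1 - bInd a = bInd (!a) := by
  cases a <;> simp [bInd]

lemma integral_bInd {Ω : Type*} [MeasurableSpace Ω] {μ : Measure Ω} {b : Ω → Bool}
    (hb : Measurable b) : ∫ ω, bInd (b ω) ∂μ = μ.real {ω | b ω = true} := by
  have hA : MeasurableSet {ω | b ω = true} := hb (measurableSet_singleton true)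
  rw [← integral_indicator_one hA]
  congr with ω
  by_cases h : b ω <;> simp [bInd, h]

lemma ProbabilityTheory.IndepFun.integral_cond_preimage {Ω 𝓧 𝓩 : Type*} [MeasurableSpace Ω]
    [MeasurableSpace 𝓧] [MeasurableSpace 𝓩] {μ : Measure Ω} [IsFiniteMeasure μ]
    {X : Ω → 𝓧} {Z : Ω → 𝓩} (hXZ : IndepFun X Z μ) (hX : Measurable X) (hZ : Measurable Z)
    {T : Set 𝓩} (hT : MeasurableSet T) (hμT : μ (Z ⁻¹' T) ≠ 0)
    {f : 𝓧 → ℝ} (hf : Measurable f) :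
    ∫ ω, f (X ω) ∂μ[|Z ⁻¹' T] = ∫ ω, f (X ω) ∂μ := by
  rw [cond, integral_smul_measure, Indep.setIntegral_eq_mul hZ.comap_le hXZ.symm
    hX.aemeasurable ⟨T, hT, rfl⟩ hf.aestronglyMeasurable, smul_eq_mul,
    ← mul_assoc, measureReal_def, ENNReal.toReal_inv,
    inv_mul_cancel₀ (ENNReal.toReal_ne_zero.2 ⟨hμT, measure_ne_top μ _⟩), one_mul]

lemma integral_cond_instruments_eq_integral_potential {Ω : Type*} [MeasurableSpace Ω]
    {P : Measure Ω} [IsFiniteMeasure P] {Di Dj : Bool → Bool → Ω → Bool} {Zi Zj : Ω → Bool}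
    (hDi : ∀ z z', Measurable (Di z z')) (hDj : ∀ z z', Measurable (Dj z z'))
    (hZi : Measurable Zi) (hZj : Measurable Zj)
    (hindep : IndepFun (fun ω => ((fun z z' => Di z z' ω), (fun z z' => Dj z z' ω)))
      (fun ω => (Zi ω, Zj ω)) P)
    {z z' : Bool} (hpos : P ({x | Zi x = z} ∩ {x | Zj x = z'}) ≠ 0) (g : Bool → Bool → ℝ) :
    ∫ ω, g (Di (Zi ω) (Zj ω) ω) (Dj (Zj ω) (Zi ω) ω) ∂P[|{x | Zi x = z} ∩ {x | Zj x = z'}]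
      = ∫ ω, g (Di z z' ω) (Dj z' z ω) ∂P := by
  have hs : {x | Zi x = z} ∩ {x | Zj x = z'} = (fun ω => (Zi ω, Zj ω)) ⁻¹' {(z, z')} := by
    ext; simp
  have hsmeas : MeasurableSet ({x | Zi x = z} ∩ {x | Zj x = z'}) :=
    (hZi (measurableSet_singleton z)).inter (hZj (measurableSet_singleton z'))
  calc _ = ∫ ω, g (Di z z' ω) (Dj z' z ω) ∂P[|{x | Zi x = z} ∩ {x | Zj x = z'}] :=
        integral_congr_ae <| ae_cond_of_forall_mem hsmeas fun ω ⟨hi, hj⟩ => by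
          rw [show Zi ω = z from hi, show Zj ω = z' from hj]
    _ = _ := by
      rw [hs] at hpos ⊢
      exact hindep.integral_cond_preimage (by fun_prop) (by fun_prop) (measurableSet_singleton _)
        hpos (f := fun D => g (D.1 z z') (D.2 z' z)) (by fun_prop)

theorem stmt_1_general
    {Ω : Type*} [MeasurableSpace Ω] (P : Measure Ω) [IsProbabilityMeasure P]
    (Y : Bool → Bool → Ω → ℝ) (Di Dj : Bool → Bool → Ω → Bool)
    (Zi Zj : Ω → Bool)
    (hDimeas : ∀ z z', Measurable (Di z z'))
    (hDjmeas : ∀ z z', Measurable (Dj z z'))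
    (hZi : Measurable Zi) (hZj : Measurable Zj)
    (hpos : ∀ z z', 0 < P ({x | Zi x = z} ∩ {x | Zj x = z'}))
    (hIV : IndepFun
      (fun ω => ((fun d d' => Y d d' ω),
                 (fun z z' => Di z z' ω),
                 (fun z z' => Dj z z' ω)))
      (fun ω => (Zi ω, Zj ω)) P)
    :
    (P ({x | Di false false x = true} ∩ {x | Dj false false x = true})).toReal = (∫ ω, bInd (Di (Zi ω) (Zj ω) ω) * bInd (Dj (Zj ω) (Zi ω) ω) ∂(P[|({x | Zi x = false} ∩ {x | Zj x = false})]))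
    ∧ (P ({x | Di true true x = false} ∩ {x | Dj true true x = false})).toReal = (∫ ω, (1 - bInd (Di (Zi ω) (Zj ω) ω)) * (1 - bInd (Dj (Zj ω) (Zi ω) ω)) ∂(P[|({x | Zi x = true} ∩ {x | Zj x = true})])) := by
  have hindep : IndepFun (fun ω => ((fun z z' => Di z z' ω), (fun z z' => Dj z z' ω)))
      (fun ω => (Zi ω, Zj ω)) P :=
    hIV.comp measurable_snd measurable_id
  refine ⟨?_, ?_⟩
  · rw [integral_cond_instruments_eq_integral_potential hDimeas hDjmeas hZi hZj hindep
      (hpos false false).ne' (fun a b => bInd a * bInd b)]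
    simp only [bInd_mul_bInd]
    rw [integral_bInd (by fun_prop)]
    exact congrArg (fun s => (P s).toReal) (by ext; simp)
  · rw [integral_cond_instruments_eq_integral_potential hDimeas hDjmeas hZi hZj hindep
      (hpos true true).ne' (fun a b => (1 - bInd a) * (1 - bInd b))]
    simp only [one_sub_bInd, bInd_mul_bInd]
    rw [integral_bInd (by fun_prop)]
    exact congrArg (fun s => (P s).toReal) (by ext; simp)

theorem stmt_1
    {Ω : Type*} [MeasurableSpace Ω] (P : Measure Ω) [IsProbabilityMeasure P]
    (Y : Bool → Bool → Ω → ℝ) (Di Dj : Bool → Bool → Ω → Bool)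
    (Zi Zj : Ω → Bool)
    (hYmeas : ∀ d d', Measurable (Y d d'))
    (hYint : ∀ d d', Integrable (Y d d') P)
    (hDimeas : ∀ z z', Measurable (Di z z'))
    (hDjmeas : ∀ z z', Measurable (Dj z z'))
    (hZi : Measurable Zi) (hZj : Measurable Zj)
    (hpos : ∀ z z', 0 < P ({x | Zi x = z} ∩ {x | Zj x = z'}))
    (hIV : IndepFun
      (fun ω => ((fun d d' => Y d d' ω),
                 (fun z z' => Di z z' ω),
                 (fun z z' => Dj z z' ω)))
      (fun ω => (Zi ω, Zj ω)) P)
    (hmono : ∀ᵐ ω ∂P,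
      (Di false false ω ≤ Di false true ω ∧ Di false true ω ≤ Di true false ω ∧
        Di true false ω ≤ Di true true ω) ∧
      (Dj false false ω ≤ Dj false true ω ∧ Dj false true ω ≤ Dj true false ω ∧
        Dj true false ω ≤ Dj true true ω))
    :
    (P ({x | Di false false x = true} ∩ {x | Dj false false x = true})).toReal = (∫ ω, bInd (Di (Zi ω) (Zj ω) ω) * bInd (Dj (Zj ω) (Zi ω) ω) ∂(P[|({x | Zi x = false} ∩ {x | Zj x = false})]))
    ∧ (P ({x | Di true true x = false} ∩ {x | Dj true true x = false})).toReal = (∫ ω, (1 - bInd (Di (Zi ω) (Zj ω) ω)) * (1 - bInd (Dj (Zj ω) (Zi ω) ω)) ∂(P[|({x | Zi x = true} ∩ {x | Zj x = true})])) :=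
  stmt_1_general P Y Di Dj Zi Zj hDimeas hDjmeas hZi hZj hpos hIV
end

section
/- Local average direct effect under one-sided noncompliance: under Assumptions 1, 2 and 4, if P[C_i] > 0 then E[Y(1,0) − Y(0,0) | C_i] = (E[Y | Z_i=1, Z_j=0] − E[Y | Z_i=0, Z_j=0]) / E[D_i | Z_i=1, Z_j=0]. -/
/-!
On the cell `{Z = (1,0)}` one-sided noncompliance forces `D_j = D_j(0,1) = 0`, so there the
observed outcome is `Y(D_i(1,0), 0)` and the observed treatment is `D_i(1,0)`; on `{Z = (0,0)}`
the observed outcome is `Y(0,0)`. These are functions of the potential values, which are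
independent of the instruments, so conditioning on the cell does not change their means. Hence
the numerator is `E[Y(D_i(1,0),0) - Y(0,0)] = E[1_C (Y(1,0) - Y(0,0))]` and the denominator is
`P[C]`, where `C = {D_i(1,0) = 1}` agrees a.e. with the complier event because `D_i(0,1) = 0`.
-/

open MeasureTheory ProbabilityTheory

namespace ProbabilityTheory

variable {Ω : Type*} [MeasurableSpace Ω] {P : Measure Ω}

lemma integral_cond_eq_setIntegral_div (s : Set Ω) (f : Ω → ℝ) :
    ∫ ω, f ω ∂P[|s] = (∫ ω in s, f ω ∂P) / P.real s := by
  rw [ProbabilityTheory.cond, integral_smul_measure, ENNReal.toReal_inv, smul_eq_mul,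
    measureReal_def, inv_mul_eq_div]

lemma cond_congr_ae {s t : Set Ω} (h : s =ᵐ[P] t) : P[|s] = P[|t] := by
  rw [ProbabilityTheory.cond, ProbabilityTheory.cond, measure_congr h,
    Measure.restrict_congr_set h]

lemma integral_cond_congr_ae {s : Set Ω} (hs : MeasurableSet s) {f g : Ω → ℝ}
    (h : ∀ᵐ ω ∂P, ω ∈ s → f ω = g ω) :
    ∫ ω, f ω ∂P[|s] = ∫ ω, g ω ∂P[|s] := by
  refine integral_congr_ae ?_
  filter_upwards [ae_cond_mem hs, cond_absolutelyContinuous.ae_le h] with ω hω hfg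
  exact hfg hω

lemma IndepFun.setIntegral_preimage_eq_mul {β : Type*} [MeasurableSpace β]
    {f : Ω → ℝ} {Z : Ω → β} (hfZ : IndepFun f Z P) (hf : AEStronglyMeasurable f P)
    (hZ : Measurable Z) {s : Set β} (hs : MeasurableSet s) :
    ∫ ω in Z ⁻¹' s, f ω ∂P = (∫ ω, f ω ∂P) * P.real (Z ⁻¹' s) := by
  have hA : MeasurableSet (Z ⁻¹' s) := hZ hs
  have hg : Measurable (s.indicator (1 : β → ℝ)) := measurable_const.indicator hs
  calc ∫ ω in Z ⁻¹' s, f ω ∂P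
        = ∫ ω, (f * (s.indicator (1 : β → ℝ) ∘ Z)) ω ∂P := by
        rw [← integral_indicator hA]
        congr 1
        funext ω
        by_cases h : Z ω ∈ s <;> simp [h]
    _ = (∫ ω, f ω ∂P) * ∫ ω, (s.indicator (1 : β → ℝ) ∘ Z) ω ∂P :=
        (hfZ.comp measurable_id hg).integral_mul_eq_mul_integral hf
          (hg.comp hZ).aestronglyMeasurable
    _ = (∫ ω, f ω ∂P) * P.real (Z ⁻¹' s) := by
        rw [← integral_indicator_one hA]
        rfl

lemma IndepFun.integral_cond_preimage_eq_integral [IsFiniteMeasure P] {β : Type*}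
    [MeasurableSpace β] {f : Ω → ℝ} {Z : Ω → β} (hfZ : IndepFun f Z P)
    (hf : AEStronglyMeasurable f P) (hZ : Measurable Z) {s : Set β} (hs : MeasurableSet s)
    (hPs : P (Z ⁻¹' s) ≠ 0) :
    ∫ ω, f ω ∂P[|Z ⁻¹' s] = ∫ ω, f ω ∂P := by
  have hPs' : P.real (Z ⁻¹' s) ≠ 0 := (measureReal_ne_zero_iff (measure_ne_top P _)).2 hPs
  rw [integral_cond_eq_setIntegral_div, hfZ.setIntegral_preimage_eq_mul hf hZ hs,
    mul_div_cancel_right₀ _ hPs']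

lemma IndepFun.integral_cond_preimage_of_ae_eq [IsFiniteMeasure P] {T β : Type*}
    [MeasurableSpace T] [MeasurableSpace β] {W : Ω → T} {Z : Ω → β} (hWZ : IndepFun W Z P)
    (hZ : Measurable Z) {s : Set β} (hs : MeasurableSet s) (hPs : P (Z ⁻¹' s) ≠ 0)
    {φ : T → ℝ} (hφ : Measurable φ) (hφW : AEStronglyMeasurable (fun ω => φ (W ω)) P)
    {f : Ω → ℝ} (hf : ∀ᵐ ω ∂P, Z ω ∈ s → f ω = φ (W ω)) :
    ∫ ω, f ω ∂P[|Z ⁻¹' s] = ∫ ω, φ (W ω) ∂P := by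
  rw [integral_cond_congr_ae (hZ hs) hf]
  exact (hWZ.comp hφ measurable_id).integral_cond_preimage_eq_integral hφW hZ hs hPs

end ProbabilityTheory

lemma Measurable.apply_of_countable {α ι β : Type*} [MeasurableSpace α] [MeasurableSpace ι]
    [Countable ι] [MeasurableSingletonClass ι] [MeasurableSpace β] {f : α → ι → β}
    (hf : Measurable f) {g : α → ι} (hg : Measurable g) : Measurable fun a => f a (g a) :=
  (measurable_from_prod_countable_left (f := fun p : α × ι => f p.1 p.2)
    fun i => (measurable_pi_apply i).comp hf).comp (measurable_id.prodMk hg)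

section

variable {Ω : Type*} {b : Ω → Bool}

lemma bool_comp_eq_add_indicator (g : Bool → Ω → ℝ) :
    (fun ω => g (b ω) ω) = g false + {ω | b ω = true}.indicator (g true - g false) := by
  funext ω
  cases h : b ω <;> simp [h]

variable [MeasurableSpace Ω] {P : Measure Ω}

lemma integrable_bool_comp (hb : Measurable b) {g : Bool → Ω → ℝ}
    (hg : ∀ d, Integrable (g d) P) : Integrable (fun ω => g (b ω) ω) P := by
  rw [bool_comp_eq_add_indicator]
  exact (hg false).add (((hg true).sub (hg false)).indicator (hb (measurableSet_singleton true)))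

lemma integral_bool_comp_sub_eq_setIntegral (hb : Measurable b) {g : Bool → Ω → ℝ}
    (hg : ∀ d, Integrable (g d) P) :
    ∫ ω, g (b ω) ω ∂P - ∫ ω, g false ω ∂P
      = ∫ ω in {ω | b ω = true}, g true ω - g false ω ∂P := by
  have hs : MeasurableSet {ω | b ω = true} := hb (measurableSet_singleton true)
  rw [bool_comp_eq_add_indicator,
    integral_add' (hg false) (((hg true).sub (hg false)).indicator hs), add_sub_cancel_left,
    integral_indicator hs]
  rfl

lemma integral_bInd_comp (hb : Measurable b) :
    ∫ ω, bInd (b ω) ∂P = P.real {ω | b ω = true} := by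
  change _ = P.real (b ⁻¹' {true})
  rw [← integral_indicator_one (hb (measurableSet_singleton true))]
  congr 1
  funext ω
  cases h : b ω <;> simp [bInd, h]

end

theorem stmt_9_general
    {Ω : Type*} [MeasurableSpace Ω] (P : Measure Ω) [IsProbabilityMeasure P]
    (Y : Bool → Bool → Ω → ℝ) (Di Dj : Bool → Bool → Ω → Bool)
    (Zi Zj : Ω → Bool)
    (hYint : ∀ d d', Integrable (Y d d') P)
    (hDimeas : ∀ z z', Measurable (Di z z'))
    (hZi : Measurable Zi) (hZj : Measurable Zj)
    (hpos : ∀ z z', 0 < P ({x | Zi x = z} ∩ {x | Zj x = z'}))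
    (hIV : IndepFun
      (fun ω => ((fun d d' => Y d d' ω),
                 (fun z z' => Di z z' ω),
                 (fun z z' => Dj z z' ω)))
      (fun ω => (Zi ω, Zj ω)) P)
    (hosn : ∀ᵐ ω ∂P,
      Di false false ω = false ∧ Di false true ω = false ∧
      Dj false false ω = false ∧ Dj false true ω = false)
    :
    (∫ ω, (Y true false ω - Y false false ω) ∂(P[|{x | Di true false x = true ∧ Di false true x = false}]))
    = ((∫ ω, (Y (Di (Zi ω) (Zj ω) ω) (Dj (Zj ω) (Zi ω) ω) ω) ∂(P[|({x | Zi x = true} ∩ {x | Zj x = false})])) - (∫ ω, (Y (Di (Zi ω) (Zj ω) ω) (Dj (Zj ω) (Zi ω) ω) ω) ∂(P[|({x | Zi x = false} ∩ {x | Zj x = false})])))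
      / (∫ ω, bInd (Di (Zi ω) (Zj ω) ω) ∂(P[|({x | Zi x = true} ∩ {x | Zj x = false})])) := by
  set Z : Ω → Bool × Bool := fun ω => (Zi ω, Zj ω)
  have hZ : Measurable Z := hZi.prodMk hZj
  have cell (z z' : Bool) : {x | Zi x = z} ∩ {x | Zj x = z'} = Z ⁻¹' {(z, z')} := by
    ext ω; simp [Z]
  simp only [cell] at hpos ⊢
  have hD := hDimeas true false
  have obs10 : ∫ ω, Y (Di (Zi ω) (Zj ω) ω) (Dj (Zj ω) (Zi ω) ω) ω
      ∂P[|Z ⁻¹' {(true, false)}] = ∫ ω, Y (Di true false ω) false ω ∂P :=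
    hIV.integral_cond_preimage_of_ae_eq hZ (measurableSet_singleton _) (hpos true false).ne'
      (φ := fun w => w.1 (w.2.1 true false) false)
      (Measurable.apply_of_countable (by fun_prop) (by fun_prop)).eval
      (integrable_bool_comp hD fun d => hYint d false).aestronglyMeasurable
      (by filter_upwards [hosn] with ω hω hZω; simp_all [Z, Prod.ext_iff])
  have obs00 : ∫ ω, Y (Di (Zi ω) (Zj ω) ω) (Dj (Zj ω) (Zi ω) ω) ω
      ∂P[|Z ⁻¹' {(false, false)}] = ∫ ω, Y false false ω ∂P :=
    hIV.integral_cond_preimage_of_ae_eq hZ (measurableSet_singleton _) (hpos false false).ne'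
      (φ := fun w => w.1 false false) (by fun_prop) (hYint false false).aestronglyMeasurable
      (by filter_upwards [hosn] with ω hω hZω; simp_all [Z, Prod.ext_iff])
  have takeup10 : ∫ ω, bInd (Di (Zi ω) (Zj ω) ω)
      ∂P[|Z ⁻¹' {(true, false)}] = ∫ ω, bInd (Di true false ω) ∂P :=
    hIV.integral_cond_preimage_of_ae_eq hZ (measurableSet_singleton _) (hpos true false).ne'
      (φ := fun w => bInd (w.2.1 true false)) (by fun_prop) (by fun_prop)
      (by filter_upwards with ω hZω; simp_all [Z, Prod.ext_iff])
  have compliers : {x | Di true false x = true ∧ Di false true x = false}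
      =ᵐ[P] {ω | Di true false ω = true} :=
    Filter.eventuallyEq_set.2 (hosn.mono fun ω hω => by simp [hω.2.1])
  rw [cond_congr_ae compliers, integral_cond_eq_setIntegral_div, obs10, obs00, takeup10,
    integral_bool_comp_sub_eq_setIntegral hD fun d => hYint d false, integral_bInd_comp hD]

theorem stmt_9
    {Ω : Type*} [MeasurableSpace Ω] (P : Measure Ω) [IsProbabilityMeasure P]
    (Y : Bool → Bool → Ω → ℝ) (Di Dj : Bool → Bool → Ω → Bool)
    (Zi Zj : Ω → Bool)
    (hYmeas : ∀ d d', Measurable (Y d d'))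
    (hYint : ∀ d d', Integrable (Y d d') P)
    (hDimeas : ∀ z z', Measurable (Di z z'))
    (hDjmeas : ∀ z z', Measurable (Dj z z'))
    (hZi : Measurable Zi) (hZj : Measurable Zj)
    (hpos : ∀ z z', 0 < P ({x | Zi x = z} ∩ {x | Zj x = z'}))
    (hIV : IndepFun
      (fun ω => ((fun d d' => Y d d' ω),
                 (fun z z' => Di z z' ω),
                 (fun z z' => Dj z z' ω)))
      (fun ω => (Zi ω, Zj ω)) P)
    (hmono : ∀ᵐ ω ∂P,
      (Di false false ω ≤ Di false true ω ∧ Di false true ω ≤ Di true false ω ∧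
        Di true false ω ≤ Di true true ω) ∧
      (Dj false false ω ≤ Dj false true ω ∧ Dj false true ω ≤ Dj true false ω ∧
        Dj true false ω ≤ Dj true true ω))
    (hosn : ∀ᵐ ω ∂P,
      Di false false ω = false ∧ Di false true ω = false ∧
      Dj false false ω = false ∧ Dj false true ω = false)
    (hC : 0 < P ({x | Di true false x = true ∧ Di false true x = false}))
    :
    (∫ ω, (Y true false ω - Y false false ω) ∂(P[|{x | Di true false x = true ∧ Di false true x = false}]))
    = ((∫ ω, (Y (Di (Zi ω) (Zj ω) ω) (Dj (Zj ω) (Zi ω) ω) ω) ∂(P[|({x | Zi x = true} ∩ {x | Zj x = false})])) - (∫ ω, (Y (Di (Zi ω) (Zj ω) ω) (Dj (Zj ω) (Zi ω) ω) ω) ∂(P[|({x | Zi x = false} ∩ {x | Zj x = false})])))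
      / (∫ ω, bInd (Di (Zi ω) (Zj ω) ω) ∂(P[|({x | Zi x = true} ∩ {x | Zj x = false})])) :=
  stmt_9_general P Y Di Dj Zi Zj hYint hDimeas hZi hZj hpos hIV hosn
end
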